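/- arXiv:2402.09956 — 3 statements merged into one kernel-verified Lean document; each statement's English description precedes it below -/
import Mathlib

section
/- Let d, n be positive natural numbers, let k, k' : Fin n with k ≠ k', let c : Bool be a verification outcome and y : Bool arbitrary. If a : Fin d → Fin n → Bool is chosen uniformly at random (all d·n bits independent fair coin flips), then the expected value of the cardinality of the index set P_{c,y}(proofSeq a k c, k, k') equals d/4. In particular the expected cardinalities for y = c and y = ¬c are equal, both being d/4. (Proposition 1, equation (15).) -/
/-- The consistent proof sequence built from the bit sequence `a`, the position `k`
and the verification outcome `c`. -/
def proofSeq {d n : ℕ} (a : Fin d → Fin n → Bool) (k : Fin n) (c : Bool) :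
    Fin d → Option (Fin n → Bool) :=
  fun l => if a l k = c then some (a l) else none

/-- `P_{x,y}(p, k, k')`: the set of indices of non-cryptic tuples of `p` whose bit
in position `k` equals `x` and whose bit in position `k'` equals `y`. -/
def Pxy {d n : ℕ} (p : Fin d → Option (Fin n → Bool)) (k k' : Fin n) (x y : Bool) :
    Finset (Fin d) :=
  Finset.univ.filter (fun l => ∃ t, p l = some t ∧ t k = x ∧ t k' = y)

/-!
Once the verification outcome at `k` is `c`, `proofSeq` reveals the whole tuple, so
`P_{c,y}(proofSeq a k c, k, k')` is just the set of `l` with `a l k = c` and `a l k' = y`.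
By linearity of expectation its expected size is the sum over `l` of the probability of
that event, and for `k ≠ k'` the bits `a l k` and `a l k'` are independent fair coins,
so each probability is `1/4`.
-/

open Finset

lemma PMF.sum_uniformOfFintype_toReal_mul {α : Type*} [Fintype α] [Nonempty α] (f : α → ℝ) :
    ∑ a, (uniformOfFintype α a).toReal * f a = (∑ a, f a) / Fintype.card α := by
  simp [uniformOfFintype_apply, ← Finset.mul_sum, div_eq_inv_mul]

section Counting

variable {ι κ β : Type*} [Fintype ι] [DecidableEq ι] [Fintype κ] [DecidableEq κ] [Fintype β]
  [DecidableEq β]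

def Function.equivFiberApplyPair {i j : ι} (hij : i ≠ j) (x y : β) :
    (ι → β) ≃ {g : ι → β // g i = x ∧ g j = y} × β × β where
  toFun g := (⟨update (update g i x) j y, by simp [hij]⟩, g i, g j)
  invFun p := update (update p.1 i p.2.1) j p.2.2
  left_inv g := by
    ext t
    simp only [update_apply]
    split_ifs <;> simp_all
  right_inv := by
    rintro ⟨⟨g, hx, hy⟩, u, v⟩
    ext t <;> simp only [update_apply] <;> split_ifs <;> simp_all

lemma card_filter_apply_eq_and_apply_eq_mul {i j : ι} (hij : i ≠ j) (x y : β) :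
    #{g : ι → β | g i = x ∧ g j = y} * Fintype.card β ^ 2 = Fintype.card (ι → β) := by
  rw [Fintype.card_congr (Function.equivFiberApplyPair hij x y), Fintype.card_prod,
    Fintype.card_prod, Fintype.card_subtype, sq]

lemma card_filter_apply_apply_eq_and_apply_apply_eq_mul (l : ι) {k k' : κ} (hkk' : k ≠ k')
    (x y : β) :
    #{a : ι → κ → β | a l k = x ∧ a l k' = y} * Fintype.card β ^ 2 =
      Fintype.card (ι → κ → β) := by
  have hlk : (l, k) ≠ (l, k') := by simpa using hkk'
  rw [← Fintype.card_congr (Equiv.curry ι κ β), ← card_filter_apply_eq_and_apply_eq_mul hlk x y,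
    card_equiv (t := {g : ι × κ → β | g (l, k) = x ∧ g (l, k') = y}) (Equiv.curry ι κ β).symm
      (by simp)]

end Counting

lemma Pxy_proofSeq {d n : ℕ} (a : Fin d → Fin n → Bool) (k k' : Fin n) (c y : Bool) :
    Pxy (proofSeq a k c) k k' c y = ({l | a l k = c ∧ a l k' = y} : Finset (Fin d)) := by
  ext l
  by_cases h : a l k = c <;> simp [Pxy, proofSeq, h]

theorem expected_card_Pxy_general (d n : ℕ) (k k' : Fin n)
    (hkk' : k ≠ k') (c y : Bool) :
    (∑ a : Fin d → Fin n → Bool,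
      ((PMF.uniformOfFintype (Fin d → Fin n → Bool)) a).toReal *
        ((Pxy (proofSeq a k c) k k' c y).card : ℝ)) = d / 4 := by
  set N := Fintype.card (Fin d → Fin n → Bool)
  have hfiber (l : Fin d) :
      (#{a : Fin d → Fin n → Bool | a l k = c ∧ a l k' = y} : ℝ) = N / 4 := by
    rw [eq_div_iff four_ne_zero]
    exact_mod_cast card_filter_apply_apply_eq_and_apply_apply_eq_mul l hkk' c y
  have hswap : ∑ a : Fin d → Fin n → Bool, #{l | a l k = c ∧ a l k' = y} =
      ∑ l : Fin d, #{a : Fin d → Fin n → Bool | a l k = c ∧ a l k' = y} := by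
    simp only [card_filter]
    exact sum_comm
  have hN : (N : ℝ) ≠ 0 := by positivity
  calc _ = (∑ a : Fin d → Fin n → Bool, (#{l | a l k = c ∧ a l k' = y} : ℝ)) / N := by
        simp only [PMF.sum_uniformOfFintype_toReal_mul, Pxy_proofSeq, N]
    _ = (∑ l : Fin d, (N : ℝ) / 4) / N := by
        rw [← sum_congr rfl fun l _ => hfiber l]
        exact_mod_cast congrArg (fun m : ℕ => (m : ℝ) / N) hswap
    _ = d / 4 := by
        rw [sum_const, card_univ, Fintype.card_fin, nsmul_eq_mul]
        field_simp

/-- Proposition 1, equation (15): for `k ≠ k'` and any bit `y`, the expected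
cardinality of `P_{c,y}(proofSeq a k c, k, k')` under the uniform distribution
on `a` is `d / 4` (in particular the expected cardinalities for `y = c` and
`y = ¬c` coincide, both being `d / 4`). -/
theorem expected_card_Pxy (d n : ℕ) (hd : 0 < d) (hn : 0 < n) (k k' : Fin n)
    (hkk' : k ≠ k') (c y : Bool) :
    (∑ a : Fin d → Fin n → Bool,
      ((PMF.uniformOfFintype (Fin d → Fin n → Bool)) a).toReal *
        ((Pxy (proofSeq a k c) k k' c y).card : ℝ)) = d / 4 :=
  expected_card_Pxy_general d n k k' hkk' c y
end

section
/- Let d, n be positive natural numbers, a : Fin d → Fin n → Bool, and k, k' : Fin n with k ≠ k'. Write 𝟙_k = proofSeq a k true, 𝟘_k = proofSeq a k false, 𝟙_{k'} = proofSeq a k' true and 𝟘_{k'} = proofSeq a k' false. Then P_{1,0}(𝟙_k, k, k') = P_{1,0}(𝟘_{k'}, k, k') and P_{0,1}(𝟘_k, k, k') = P_{0,1}(𝟙_{k'}, k, k'). (Proposition 2: if a news aggregator receives outcome 1 (resp. 0) with a consistent proof, and another aggregator presents the opposite outcome 0 (resp. 1) with a consistent proof, then the two proofs must contain exactly the same tuples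 carrying the value 1 (resp. 0) in position k and the opposite value 0 (resp. 1) in position k'.) -/
/-!
A consistent proof for outcome `c` at position `j` keeps exactly the tuples with bit `c`
at `j`. When `(j, c)` is `(k, x)` or `(k', y)`, this filter is already implied by the
condition defining `P_{x,y}`, so both proofs have the same `P_{x,y}` as the full,
uncensored sequence `some ∘ a`.
-/

section

variable {d n : ℕ} (a : Fin d → Fin n → Bool)

theorem mem_Pxy_proofSeq {j k k' : Fin n} {c x y : Bool} {l : Fin d} :
    l ∈ Pxy (proofSeq a j c) k k' x y ↔ a l j = c ∧ a l k = x ∧ a l k' = y := by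
  unfold Pxy proofSeq
  by_cases h : a l j = c <;> simp [h]

theorem mem_Pxy_some {k k' : Fin n} {x y : Bool} {l : Fin d} :
    l ∈ Pxy (some ∘ a) k k' x y ↔ a l k = x ∧ a l k' = y := by
  simp [Pxy]

theorem Pxy_proofSeq_left (k k' : Fin n) (x y : Bool) :
    Pxy (proofSeq a k x) k k' x y = Pxy (some ∘ a) k k' x y := by
  ext l
  rw [mem_Pxy_proofSeq, mem_Pxy_some]
  exact ⟨And.right, fun h => ⟨h.1, h⟩⟩

theorem Pxy_proofSeq_right (k k' : Fin n) (x y : Bool) :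
    Pxy (proofSeq a k' y) k k' x y = Pxy (some ∘ a) k k' x y := by
  ext l
  rw [mem_Pxy_proofSeq, mem_Pxy_some]
  exact ⟨And.right, fun h => ⟨h.2, h⟩⟩

end

theorem consistent_proofs_opposite_outcomes_general (d n : ℕ)
    (a : Fin d → Fin n → Bool) (k k' : Fin n) :
    Pxy (proofSeq a k true) k k' true false =
      Pxy (proofSeq a k' false) k k' true false ∧
    Pxy (proofSeq a k false) k k' false true =
      Pxy (proofSeq a k' true) k k' false true :=
  ⟨(Pxy_proofSeq_left a k k' true false).trans (Pxy_proofSeq_right a k k' true false).symm,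
    (Pxy_proofSeq_left a k k' false true).trans (Pxy_proofSeq_right a k k' false true).symm⟩

/-- Proposition 2: writing `𝟙_k = proofSeq a k true`, `𝟘_k = proofSeq a k false`,
`𝟙_{k'} = proofSeq a k' true`, `𝟘_{k'} = proofSeq a k' false`, the two consistent
proofs for opposite verification outcomes contain exactly the same tuples carrying
`1` in position `k` and `0` in position `k'` (and symmetrically). -/
theorem consistent_proofs_opposite_outcomes (d n : ℕ) (hd : 0 < d) (hn : 0 < n)
    (a : Fin d → Fin n → Bool) (k k' : Fin n) (hkk' : k ≠ k') :
    Pxy (proofSeq a k true) k k' true false =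
      Pxy (proofSeq a k' false) k k' true false ∧
    Pxy (proofSeq a k false) k k' false true =
      Pxy (proofSeq a k' true) k k' false true :=
  consistent_proofs_opposite_outcomes_general d n a k k'
end

section
/- Let d, n be positive natural numbers, k : Fin n and c : Bool. If a : Fin d → Fin n → Bool is chosen uniformly at random (all d·n bits independent fair coin flips), then for k' : Fin n with k' ≠ k, the expected cardinality of P_{c,c}(proofSeq a k c, k, k') equals the expected cardinality of P_{c,¬c}(proofSeq a k c, k, k'). (The balance property checked by the auxiliary test IsProofBalanced: in a consistent proof sequence, tuples carrying c in position k are expected to carry c and ¬c in any other fixed position k' equally often.) -/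
/-- Flipping all bits in position `k'`, as an equivalence on bit sequences. -/
def flipEquiv (d n : ℕ) (k' : Fin n) :
    (Fin d → Fin n → Bool) ≃ (Fin d → Fin n → Bool) where
  toFun a := fun l i => if i = k' then !(a l i) else a l i
  invFun a := fun l i => if i = k' then !(a l i) else a l i
  left_inv a := by funext l i; by_cases h : i = k' <;> simp [h]
  right_inv a := by funext l i; by_cases h : i = k' <;> simp [h]

/-- The balance property checked by `IsProofBalanced`: in a consistent proof
sequence, tuples carrying `c` in position `k` are expected to carry `c` and `¬c`
in any other fixed position `k'` equally often (under the uniform distribution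
on the bit sequence `a`). -/
theorem expected_balance (d n : ℕ) (hd : 0 < d) (hn : 0 < n) (k k' : Fin n)
    (hkk' : k' ≠ k) (c : Bool) :
    (∑ a : Fin d → Fin n → Bool,
      ((PMF.uniformOfFintype (Fin d → Fin n → Bool)) a).toReal *
        ((Pxy (proofSeq a k c) k k' c c).card : ℝ)) =
    (∑ a : Fin d → Fin n → Bool,
      ((PMF.uniformOfFintype (Fin d → Fin n → Bool)) a).toReal *
        ((Pxy (proofSeq a k c) k k' c (!c)).card : ℝ)) := by
  rw [← Equiv.sum_comp (flipEquiv d n k')]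
  refine Finset.sum_congr rfl fun a _ => ?_
  have hval : ∀ b : Fin d → Fin n → Bool,
      (PMF.uniformOfFintype (Fin d → Fin n → Bool)) b =
      (PMF.uniformOfFintype (Fin d → Fin n → Bool)) a := by
    intro b; simp [PMF.uniformOfFintype_apply]
  rw [hval]
  have hset : Pxy (proofSeq ((flipEquiv d n k') a) k c) k k' c c =
      Pxy (proofSeq a k c) k k' c (!c) := by
    ext l
    have hk : ¬ k = k' := fun e => hkk' e.symm
    by_cases h : a l k = c <;>
      simp [Pxy, proofSeq, flipEquiv, hk, h] <;>
      cases hc : a l k' <;> cases c <;> simp_all <;>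
      first
        | exact hk
        | exact ⟨_, ⟨hk, rfl⟩, by simp [hk, h], by simp [hc]⟩
  rw [hset]
end
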